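/- For every p ∈ (0, 1/2), one has (2/3)·(1 − H_b(p)) < (1/3)·(D_b(1/2 ‖ p) + D_b(p ‖ 1/2)); in the ternary example this says that I(X;Y)|_P is strictly smaller than D(P_{XY} ‖ Q_{XY}). -/

import Mathlib

open scoped BigOperators

noncomputable section

/-- The binary relative entropy `D_b(a‖b) = a log₂(a/b) + (1-a) log₂((1-a)/(1-b))`. -/
def Db (a b : ℝ) : ℝ :=
  a * Real.logb 2 (a / b) + (1 - a) * Real.logb 2 ((1 - a) / (1 - b))

/-- The binary entropy function `H_b(p) = -p log₂ p - (1-p) log₂ (1-p)`. -/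
def Hb (p : ℝ) : ℝ := -p * Real.logb 2 p - (1 - p) * Real.logb 2 (1 - p)

/-- `P_{Y|X}(1|x)` in the ternary example: `1/2, p, 1-p` for `x = 0, 1, 2`. -/
def pGivenX (p : ℝ) : Fin 3 → ℝ := fun x => if x = 0 then 1 / 2 else if x = 1 then p else 1 - p

/-- `Q_{Y|X}(1|x)` in the ternary example: `p, 1/2, 1-p` for `x = 0, 1, 2`. -/
def qGivenX (p : ℝ) : Fin 3 → ℝ := fun x => if x = 0 then p else if x = 1 then 1 / 2 else 1 - p

/-- `P_{XY}` in the ternary example: `X` uniform on `{0,1,2}` and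
`P_{Y|X}(1|0) = 1/2`, `P_{Y|X}(1|1) = p`, `P_{Y|X}(1|2) = 1-p`. -/
def Pxy (p : ℝ) : Fin 3 × Fin 2 → ℝ :=
  fun z => (1 / 3) * (if z.2 = 1 then pGivenX p z.1 else 1 - pGivenX p z.1)

/-- `Q_{XY}` in the ternary example: `X` uniform on `{0,1,2}` and
`Q_{Y|X}(1|0) = p`, `Q_{Y|X}(1|1) = 1/2`, `Q_{Y|X}(1|2) = 1-p`. -/
def Qxy (p : ℝ) : Fin 3 × Fin 2 → ℝ :=
  fun z => (1 / 3) * (if z.2 = 1 then qGivenX p z.1 else 1 - qGivenX p z.1)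

/-! The difference between the two sides is, up to the factor `3 log 2`, the function
`g q = 2 log 2 + (q + 1/2) log q + (3/2 - q) log (1 - q)`, which vanishes at `q = 1/2`.
With `x = (1 - q)/q > 1` its derivative is `sinh (log x) - log x > 0` on `(0, 1/2)`,
so `g` is strictly increasing there and hence negative. -/

open Real

lemma Real.log_lt_sub_inv_div_two {x : ℝ} (hx : 1 < x) : log x < (x - x⁻¹) / 2 :=
  sinh_log (zero_lt_one.trans hx) ▸ self_lt_sinh_iff.2 (log_pos hx)

def ternaryGap (q : ℝ) : ℝ :=
  2 * log 2 + (q + 1 / 2) * log q + (3 / 2 - q) * log (1 - q)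

lemma hasDerivAt_ternaryGap {q : ℝ} (hq₀ : q ≠ 0) (hq₁ : q ≠ 1) :
    HasDerivAt ternaryGap
      (((1 - q) / q - ((1 - q) / q)⁻¹) / 2 - log ((1 - q) / q)) q := by
  have h1q : 1 - q ≠ 0 := sub_ne_zero.2 hq₁.symm
  have hlog : HasDerivAt (fun q : ℝ => log q) q⁻¹ q := hasDerivAt_log hq₀
  have hlog1 : HasDerivAt (fun q : ℝ => log (1 - q)) (-1 / (1 - q)) q := by
    simpa using ((hasDerivAt_id q).const_sub 1).log h1q
  have := ((((hasDerivAt_id' q).add_const (1 / 2)).mul hlog).const_add (2 * log 2)).add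
    (((hasDerivAt_id' q).const_sub (3 / 2)).mul hlog1)
  refine this.congr_deriv ?_
  rw [log_div h1q hq₀]
  field_simp
  ring

lemma ternaryGap_half : ternaryGap (1 / 2) = 0 := by
  rw [ternaryGap, show (1 : ℝ) - 1 / 2 = 2⁻¹ by norm_num, one_div, log_inv]
  ring

lemma strictMonoOn_ternaryGap : StrictMonoOn ternaryGap (Set.Ioc 0 (1 / 2)) := by
  have hderiv : ∀ q ∈ Set.Ioc (0 : ℝ) (1 / 2), HasDerivAt ternaryGap
      (((1 - q) / q - ((1 - q) / q)⁻¹) / 2 - log ((1 - q) / q)) q :=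
    fun q hq => hasDerivAt_ternaryGap hq.1.ne' (by linarith [hq.2])
  refine strictMonoOn_of_deriv_pos (convex_Ioc 0 (1 / 2))
    (fun q hq => (hderiv q hq).continuousAt.continuousWithinAt) fun q hq => ?_
  rw [interior_Ioc] at hq
  have hx : 1 < (1 - q) / q := by rw [lt_div_iff₀ hq.1]; linarith [hq.2]
  rw [(hderiv q (Set.Ioo_subset_Ioc_self hq)).deriv]
  exact sub_pos.2 (log_lt_sub_inv_div_two hx)

lemma ternaryGap_neg {p : ℝ} (hp : p ∈ Set.Ioo (0 : ℝ) (1 / 2)) : ternaryGap p < 0 :=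
  ternaryGap_half ▸ strictMonoOn_ternaryGap ⟨hp.1, hp.2.le⟩ ⟨by norm_num, le_rfl⟩ hp.2

lemma two_mul_one_sub_Hb_sub_Db_add_Db {p : ℝ} (hp₀ : p ≠ 0) (hp₁ : p ≠ 1) :
    2 * (1 - Hb p) - (Db (1 / 2) p + Db p (1 / 2)) = ternaryGap p / log 2 := by
  have h1p : 1 - p ≠ 0 := sub_ne_zero.2 hp₁.symm
  have hlog2 : log 2 ≠ 0 := (log_pos one_lt_two).ne'
  simp only [Hb, Db, ternaryGap, logb, log_div, hp₀, h1p, one_div, ne_eq, inv_eq_zero,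
    OfNat.ofNat_ne_zero, not_false_eq_true, log_inv, show (1 : ℝ) - 2⁻¹ = 2⁻¹ by norm_num]
  field_simp
  ring

/-- For every `p ∈ (0, 1/2)`, one has
`(2/3)(1 - H_b(p)) < (1/3)(D_b(1/2 ‖ p) + D_b(p ‖ 1/2))`; in the ternary example this says
that `I(X;Y)|_P` is strictly smaller than `D(P_{XY} ‖ Q_{XY})`. -/
theorem statement14 (p : ℝ) (hp : p ∈ Set.Ioo (0 : ℝ) (1 / 2)) :
    (2 / 3) * (1 - Hb p) < (1 / 3) * (Db (1 / 2) p + Db p (1 / 2)) := by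
  have hgap : ternaryGap p / log 2 < 0 :=
    div_neg_of_neg_of_pos (ternaryGap_neg hp) (log_pos one_lt_two)
  have hdiff := two_mul_one_sub_Hb_sub_Db_add_Db hp.1.ne' (by linarith [hp.2] : p ≠ 1)
  linarith
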